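/- arXiv:1705.06007 — 2 statements merged into one kernel-verified Lean document; each statement's English description precedes it below -/
import Mathlib

section
/- Let k ≥ 1. An ideal I of B_k is maximal if and only if there exists a choice w_i ∈ {v_i, 1 − v_i} for 1 ≤ i ≤ k such that I = ⟨w_1, w_2, …, w_k⟩. -/
/-!
Each `v i` is idempotent, so a prime ideal contains `v i` or `1 - v i`; choosing that element as
`w i` gives `⟨w⟩ ≤ I`. Conversely, modulo `⟨w⟩` every `v i` is congruent to a scalar `0` or `1`,
and the `v i` generate `B_k`, so the quotient is the image of the field `F_{p^r}`. It is nonzero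
because evaluation at the matching point of `{0, 1}^k` kills every `w i`; hence `⟨w⟩` is maximal,
and a maximal `I ⊇ ⟨w⟩` must equal it.
-/

open MvPolynomial

set_option synthInstance.maxHeartbeats 400000
set_option maxHeartbeats 1000000

noncomputable def relIdeal (p r k : ℕ) [Fact p.Prime] : Ideal (MvPolynomial (Fin k) (GaloisField p r)) :=
  Ideal.span (Set.range fun i : Fin k => X i ^ 2 - X i)

/-- `B p r k` is the ring `F_{p^r}[v_1,…,v_k]/⟨v_i^2 - v_i⟩`. -/
abbrev B (p r k : ℕ) [Fact p.Prime] :=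
  MvPolynomial (Fin k) (GaloisField p r) ⧸ relIdeal p r k

/-- the image of the variable `v_i` in `B p r k`. -/
noncomputable def v (p r k : ℕ) [Fact p.Prime] (i : Fin k) : B p r k :=
  Ideal.Quotient.mk _ (X i)

theorem IsIdempotentElem.mem_or_one_sub_mem {R : Type*} [CommRing R] {P : Ideal R} [P.IsPrime]
    {e : R} (he : IsIdempotentElem e) : e ∈ P ∨ 1 - e ∈ P :=
  Ideal.IsPrime.mem_or_mem ‹_› (he.mul_one_sub_self ▸ P.zero_mem)

theorem Ideal.isMaximal_of_surjective_algebraMap_quotient {K R : Type*} [Field K] [CommRing R]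
    [Algebra K R] {J : Ideal R} (hJ : J ≠ ⊤) (h : Function.Surjective (algebraMap K (R ⧸ J))) :
    J.IsMaximal := by
  have := Ideal.Quotient.nontrivial_iff.mpr hJ
  let e := RingEquiv.ofBijective (algebraMap K (R ⧸ J)) ⟨(algebraMap K (R ⧸ J)).injective, h⟩
  exact Ideal.Quotient.maximal_of_isField J (e.symm.toMulEquiv.isField (Field.toIsField K))

theorem surjective_algebraMap_quotient_of_adjoin_eq_top {R A ι : Type*} [CommRing R] [CommRing A]
    [Algebra R A] {x : ι → A} (hx : Algebra.adjoin R (Set.range x) = ⊤) {J : Ideal A}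
    (hJ : ∀ i, ∃ a : R, x i - algebraMap R A a ∈ J) :
    Function.Surjective (algebraMap R (A ⧸ J)) := by
  have htop : (⊤ : Subalgebra R (A ⧸ J)) ≤ ⊥ := by
    rw [← (Ideal.Quotient.mkₐ R J).range_eq_top.mpr (Ideal.Quotient.mkₐ_surjective R J),
      ← Algebra.map_top, ← hx, ← Algebra.adjoin_image, Algebra.adjoin_le_iff]
    rintro _ ⟨_, ⟨i, rfl⟩, rfl⟩
    obtain ⟨a, ha⟩ := hJ i
    refine Algebra.mem_bot.mpr ⟨a, ?_⟩
    rw [Ideal.Quotient.mkₐ_eq_mk, IsScalarTower.algebraMap_apply R A, Ideal.Quotient.algebraMap_eq,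
      Ideal.Quotient.eq]
    exact J.neg_mem_iff.mp (by rwa [neg_sub])
  exact fun y => Algebra.mem_bot.mp (htop Algebra.mem_top)

section BooleanRing

variable {p r k : ℕ} [Fact p.Prime]

local notation "F" => GaloisField p r

theorem isIdempotentElem_v (i : Fin k) : IsIdempotentElem (v p r k i) := by
  rw [IsIdempotentElem, ← sq, v, ← map_pow, Ideal.Quotient.eq]
  exact Ideal.subset_span ⟨i, rfl⟩

theorem adjoin_range_v : Algebra.adjoin F (Set.range (v p r k)) = ⊤ := by
  rw [show v p r k = Ideal.Quotient.mkₐ F (relIdeal p r k) ∘ X from rfl, Set.range_comp,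
    Algebra.adjoin_image, adjoin_range_X, Algebra.map_top, AlgHom.range_eq_top]
  exact Ideal.Quotient.mkₐ_surjective F _

noncomputable def evalBool (c : Fin k → F) (hc : ∀ i, IsIdempotentElem (c i)) :
    B p r k →ₐ[F] F :=
  Ideal.Quotient.liftₐ (relIdeal p r k) (aeval c) fun _ hf =>
    RingHom.mem_ker.mp <| (Ideal.span_le (I := RingHom.ker (aeval c))).mpr
      (by rintro _ ⟨i, rfl⟩; simp [sq, (hc i).eq]) hf

@[simp]
theorem evalBool_v (c : Fin k → F) (hc : ∀ i, IsIdempotentElem (c i)) (i : Fin k) :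
    evalBool c hc (v p r k i) = c i := by
  simp [evalBool, v, Ideal.Quotient.liftₐ_apply]

theorem isMaximal_span_range_of_forall_eq_or_eq_one_sub {w : Fin k → B p r k}
    (hw : ∀ i, w i = v p r k i ∨ w i = 1 - v p r k i) : (Ideal.span (Set.range w)).IsMaximal := by
  set J := Ideal.span (Set.range w)
  have hw' : ∀ i, ∃ a : F, IsIdempotentElem a ∧ (w i = v p r k i - algebraMap F _ a ∨
      w i = -(v p r k i - algebraMap F _ a)) := fun i =>
    (hw i).elim (fun h => ⟨0, .zero, .inl (by simp [h])⟩)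
      (fun h => ⟨1, .one, .inr (by rw [h, map_one, neg_sub])⟩)
  choose c hc hwc using hw'
  have hJ : J ≤ RingHom.ker (evalBool c hc) :=
    Ideal.span_le.mpr <| Set.range_subset_iff.mpr fun i => by rcases hwc i with h | h <;> simp [h]
  have hvJ : ∀ i, v p r k i - algebraMap F _ (c i) ∈ J := fun i => by
    rcases hwc i with h | h
    · exact h ▸ Ideal.subset_span ⟨i, rfl⟩
    · exact J.neg_mem_iff.mp (h ▸ Ideal.subset_span ⟨i, rfl⟩)
  exact Ideal.isMaximal_of_surjective_algebraMap_quotient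
    (ne_top_of_le_ne_top (RingHom.ker_ne_top _) hJ)
    (surjective_algebraMap_quotient_of_adjoin_eq_top adjoin_range_v fun i => ⟨c i, hvJ i⟩)

end BooleanRing

theorem stmt_8_general (p r k : ℕ) [Fact p.Prime]
    (I : Ideal (B p r k)) :
    I.IsMaximal ↔
      ∃ w : Fin k → B p r k,
        (∀ i, w i = v p r k i ∨ w i = 1 - v p r k i) ∧
        I = Ideal.span (Set.range w) := by
  refine ⟨fun hI => ?_, fun ⟨w, hw, hIw⟩ => hIw ▸ isMaximal_span_range_of_forall_eq_or_eq_one_sub hw⟩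
  have hchoice : ∀ i, ∃ u, (u = v p r k i ∨ u = 1 - v p r k i) ∧ u ∈ I := fun i =>
    (isIdempotentElem_v i).mem_or_one_sub_mem.elim (fun h => ⟨_, .inl rfl, h⟩)
      (fun h => ⟨_, .inr rfl, h⟩)
  choose w hw hwI using hchoice
  have hle : Ideal.span (Set.range w) ≤ I := Ideal.span_le.mpr (Set.range_subset_iff.mpr hwI)
  exact ⟨w, hw, ((isMaximal_span_range_of_forall_eq_or_eq_one_sub hw).eq_of_le hI.ne_top hle).symm⟩

/-- Let `k ≥ 1`.  An ideal `I` of `B_k` is maximal iff `I = ⟨w_1, …, w_k⟩` for some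
choice `w_i ∈ {v_i, 1 - v_i}`. -/
theorem stmt_8 (p r k : ℕ) [Fact p.Prime] (hr : 1 ≤ r) (hk : 1 ≤ k)
    (I : Ideal (B p r k)) :
    I.IsMaximal ↔
      ∃ w : Fin k → B p r k,
        (∀ i, w i = v p r k i ∨ w i = 1 - v p r k i) ∧
        I = Ideal.span (Set.range w) :=
  stmt_8_general p r k I
end

section
/- Let θ = Θ_S ∘ Λ_{π,t} be an automorphism of B_k, let σ_θ be the permutation of {1,…,2^k} such that (Φ_k(θ(a)))_i = ((Φ_k(a))_{σ_θ^{−1}(i)})^{p^t} for all a ∈ B_k, and let m be the order of σ_θ. Then a B_k-submodule C of B_k^n is θ-cyclic if and only if there exist F_{p^r}-linear codes C_1,…,C_{2^k} ⊆ F_{p^r}^n such that C = Ψ̄_k^{−1}(C_1,…,C_{2^k}) and T_{φ^t}(C_i) ⊆ C_{σ_θ(i)} for every i, where φ is the Frobenius α ↦ α^p of F_{p^r} and T_{φ^t}(c_0,…,c_{n−1}) = (φ^t(c_{n−1}), φ^t(c_0), …, φ^t(c_{n−2})). In that case each C_i is closed under (T_{φ^t})^m, i.e., each C_i is a quasi-φ^{tm}-cyclic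 code of index m over F_{p^r}. -/
open MvPolynomial

set_option synthInstance.maxHeartbeats 400000
set_option maxHeartbeats 1000000

lemma v_idem (p r k : ℕ) [Fact p.Prime] (i : Fin k) : v p r k i ^ 2 = v p r k i := by
  have h : (X i ^ 2 - X i : MvPolynomial (Fin k) (GaloisField p r)) ∈ relIdeal p r k :=
    Ideal.subset_span ⟨i, rfl⟩
  have h2 := (Ideal.Quotient.eq_zero_iff_mem).mpr h
  rw [map_sub, map_pow] at h2
  have h3 := sub_eq_zero.mp h2
  simpa [v] using h3

lemma one_sub_v_idem (p r k : ℕ) [Fact p.Prime] (i : Fin k) :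
    (1 - v p r k i) ^ 2 = 1 - v p r k i := by
  have h : (1 - v p r k i) ^ 2 = 1 - 2 * v p r k i + v p r k i ^ 2 := by ring
  rw [h, v_idem]; ring

noncomputable def ThAux (p r k : ℕ) [Fact p.Prime] (S : Finset (Fin k)) :
    MvPolynomial (Fin k) (GaloisField p r) →+* B p r k :=
  (aeval (fun i : Fin k => if i ∈ S then 1 - v p r k i else v p r k i)).toRingHom

lemma ThAux_cond (p r k : ℕ) [Fact p.Prime] (S : Finset (Fin k)) :
    relIdeal p r k ≤ RingHom.ker (ThAux p r k S) := by
  refine Ideal.span_le.mpr ?_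
  rintro _ ⟨i, rfl⟩
  simp only [SetLike.mem_coe, RingHom.mem_ker, ThAux, AlgHom.toRingHom_eq_coe,
    RingHom.coe_coe, map_sub, map_pow, aeval_X]
  by_cases h : i ∈ S
  · rw [if_pos h, one_sub_v_idem, sub_self]
  · rw [if_neg h, v_idem, sub_self]

/-- The automorphism `Θ_S` of `B_k`, determined by `v_i ↦ 1 - v_i` for `i ∈ S` and
`v_i ↦ v_i` otherwise, fixing `F_{p^r}` pointwise. -/
noncomputable def Th (p r k : ℕ) [Fact p.Prime] (S : Finset (Fin k)) :
    B p r k →+* B p r k :=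
  Ideal.Quotient.lift (relIdeal p r k) (ThAux p r k S) (fun _ ha => ThAux_cond p r k S ha)

noncomputable def LamAux (p r k : ℕ) [Fact p.Prime] (π : Equiv.Perm (Fin k)) (t : ℕ) :
    MvPolynomial (Fin k) (GaloisField p r) →+* B p r k :=
  eval₂Hom ((Ideal.Quotient.mk (relIdeal p r k)).comp
      ((C : GaloisField p r →+* MvPolynomial (Fin k) (GaloisField p r)).comp
        (iterateFrobenius (GaloisField p r) p t)))
    (fun i => v p r k (π i))

lemma LamAux_cond (p r k : ℕ) [Fact p.Prime] (π : Equiv.Perm (Fin k)) (t : ℕ) :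
    relIdeal p r k ≤ RingHom.ker (LamAux p r k π t) := by
  refine Ideal.span_le.mpr ?_
  rintro _ ⟨i, rfl⟩
  simp only [SetLike.mem_coe, RingHom.mem_ker, LamAux, map_sub, map_pow, eval₂Hom_X']
  rw [v_idem, sub_self]

/-- The automorphism `Λ_{π,t}` of `B_k`, acting on `F_{p^r}` as the Frobenius power
`α ↦ α^{p^t}` and sending `v_i ↦ v_{π(i)}`. -/
noncomputable def Lam (p r k : ℕ) [Fact p.Prime] (π : Equiv.Perm (Fin k)) (t : ℕ) :
    B p r k →+* B p r k :=
  Ideal.Quotient.lift (relIdeal p r k) (LamAux p r k π t) (fun _ ha => LamAux_cond p r k π t ha)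

noncomputable def PhiAux (p r k : ℕ) [Fact p.Prime] :
    MvPolynomial (Fin k) (GaloisField p r) →+* (Fin (2 ^ k) → GaloisField p r) :=
  Pi.ringHom fun j =>
    eval₂Hom (RingHom.id (GaloisField p r))
      (fun i : Fin k => if Nat.testBit (j : ℕ) (i : ℕ) then 1 else 0)

lemma PhiAux_cond (p r k : ℕ) [Fact p.Prime] :
    relIdeal p r k ≤ RingHom.ker (PhiAux p r k) := by
  refine Ideal.span_le.mpr ?_
  rintro _ ⟨i, rfl⟩
  simp only [SetLike.mem_coe, RingHom.mem_ker, PhiAux]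
  funext j
  simp only [Pi.ringHom, RingHom.pi_apply, map_sub, map_pow, eval₂Hom_X']
  by_cases h : Nat.testBit (j : ℕ) (i : ℕ) <;> simp [h]

/-- The Gray map `Φ_k : B_k → F_{p^r}^{2^k}`: the coordinate indexed by `j` is the
evaluation of (a representative of) an element of `B_k` at the point whose `i`-th
coordinate is the `i`-th binary digit of `j`.  This agrees with the recursive
definition `Φ_k(α + β v_k) = (Φ_{k-1}(α), Φ_{k-1}(α + β))`, `Φ_0 = id`. -/
noncomputable def Phi (p r k : ℕ) [Fact p.Prime] :
    B p r k →+* (Fin (2 ^ k) → GaloisField p r) :=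
  Ideal.Quotient.lift (relIdeal p r k) (PhiAux p r k) (fun _ ha => PhiAux_cond p r k ha)

/-!
Coordinate `j` of the Gray map is evaluation at the point of `{0,1}^k` whose coordinates are the
binary digits of `j`, so the products `e_j = ∏ᵢ (vᵢ or 1 - vᵢ)` are orthogonal idempotents with
`e_j * x = Φ(x)_j • e_j` and `∑ e_j = 1`. Hence a `B_k`-submodule `C` is determined by its
coordinate codes `C_j`: if every coordinate stream of `a` agrees with that of some `g_j ∈ C`,
then `a = ∑ e_j • g_j ∈ C`. As `θ` moves Gray coordinate `σ⁻¹ j` to `j` and applies `φ^t`,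
`θ`-cyclicity of `C` is the same as `T_{φ^t}(C_j) ⊆ C_{σ j}`, and `ord σ` iterations of this
inclusion bring each `C_j` back to itself.
-/

section GrayMap

variable {p r k : ℕ} [Fact p.Prime]

lemma Phi_mk_apply (f : MvPolynomial (Fin k) (GaloisField p r)) (j : Fin (2 ^ k)) :
    Phi p r k (Ideal.Quotient.mk _ f) j =
      eval (fun i : Fin k => if Nat.testBit j i then 1 else 0) f :=
  rfl

lemma Phi_algebraMap (c : GaloisField p r) (j : Fin (2 ^ k)) :
    Phi p r k (algebraMap (GaloisField p r) (B p r k) c) j = c :=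
  (Phi_mk_apply (C c) j).trans (eval_C c)

lemma Phi_v (i : Fin k) (j : Fin (2 ^ k)) :
    Phi p r k (v p r k i) j = if Nat.testBit j i then 1 else 0 :=
  (Phi_mk_apply (X i) j).trans (eval_X _)

lemma Phi_smul_apply (c : GaloisField p r) (x : B p r k) (j : Fin (2 ^ k)) :
    Phi p r k (c • x) j = c * Phi p r k x j := by
  rw [show c • x = algebraMap _ (B p r k) c * x from Algebra.smul_def c x, map_mul, Pi.mul_apply,
    Phi_algebraMap]

variable (p r) in
noncomputable def grayIdempotent (j : Fin (2 ^ k)) : B p r k :=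
  ∏ i : Fin k, if Nat.testBit j i then v p r k i else 1 - v p r k i

lemma grayIdempotent_mul_v (j : Fin (2 ^ k)) (i : Fin k) :
    grayIdempotent p r j * v p r k i =
      if Nat.testBit j i then grayIdempotent p r j else 0 := by
  have hv : v p r k i * v p r k i = v p r k i := by rw [← sq, v_idem]
  unfold grayIdempotent
  rw [← Finset.mul_prod_erase _ _ (Finset.mem_univ i), mul_right_comm]
  split_ifs
  · rw [hv]
  · rw [sub_mul, one_mul, hv, sub_self, zero_mul]

lemma grayIdempotent_mul (j : Fin (2 ^ k)) (x : B p r k) :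
    grayIdempotent p r j * x = Phi p r k x j • grayIdempotent p r j := by
  obtain ⟨f, rfl⟩ := Ideal.Quotient.mk_surjective x
  induction f using MvPolynomial.induction_on with
  | C c =>
    rw [← algebraMap_eq, Ideal.Quotient.mk_algebraMap, Phi_algebraMap, mul_comm]
    exact (Algebra.smul_def c _).symm
  | add f g hf hg => rw [map_add, mul_add, hf, hg, map_add, Pi.add_apply, add_smul]
  | mul_X f i hf =>
    rw [map_mul, ← mul_assoc, hf, smul_mul_assoc, map_mul, Pi.mul_apply, mul_smul]
    change _ • (grayIdempotent p r j * v p r k i) = _ • (Phi p r k (v p r k i) j • _)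
    rw [grayIdempotent_mul_v, Phi_v]
    split_ifs <;> simp

lemma sum_grayIdempotent : ∑ j : Fin (2 ^ k), grayIdempotent p r j = (1 : B p r k) := by
  rw [← finFunctionFinEquiv.sum_comp]
  have hbit (f : Fin k → Fin 2) (i : Fin k) :
      Nat.testBit (finFunctionFinEquiv f) i = decide ((f i : ℕ) = 1) := by
    rw [Nat.testBit_eq_decide_div_mod_eq, ← finFunctionFinEquiv_symm_apply_val,
      Equiv.symm_apply_apply]
  simp only [grayIdempotent, hbit, decide_eq_true_eq]
  rw [← Fintype.prod_sum (fun i (b : Fin 2) => if (b : ℕ) = 1 then v p r k i else 1 - v p r k i)]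
  simp

lemma sum_grayIdempotent_mul_of_Phi_eq {x : B p r k}
    {y : Fin (2 ^ k) → B p r k} (hy : ∀ j, Phi p r k (y j) j = Phi p r k x j) :
    ∑ j, grayIdempotent p r j * y j = x := by
  simp_rw [grayIdempotent_mul, hy, ← grayIdempotent_mul, ← Finset.sum_mul, sum_grayIdempotent,
    one_mul]

end GrayMap

section GrayCodes

variable {p r k : ℕ} [Fact p.Prime] {ι : Type*}

variable (p r k) in
noncomputable def grayCoord (j : Fin (2 ^ k)) :
    (ι → B p r k) →ₗ[GaloisField p r] (ι → GaloisField p r) where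
  toFun a b := Phi p r k (a b) j
  map_add' a a' := by ext b; simp
  map_smul' c a := by ext b; exact Phi_smul_apply c (a b) j

def grayPreimage (D : Fin (2 ^ k) → Submodule (GaloisField p r) (ι → GaloisField p r)) :
    Set (ι → B p r k) :=
  {a | ∀ j, grayCoord p r k j a ∈ D j}

noncomputable def grayCode (C : Submodule (B p r k) (ι → B p r k)) (j : Fin (2 ^ k)) :
    Submodule (GaloisField p r) (ι → GaloisField p r) :=
  (C.restrictScalars (GaloisField p r)).map (grayCoord p r k j)

theorem coe_eq_grayPreimage_grayCode (C : Submodule (B p r k) (ι → B p r k)) :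
    (C : Set (ι → B p r k)) = grayPreimage (grayCode C) := by
  ext a
  refine ⟨fun ha j => ⟨a, ha, rfl⟩, fun ha => ?_⟩
  choose g hgC hga using ha
  have hsum : ∑ j, grayIdempotent p r j • g j = a := by
    ext b
    simp only [Finset.sum_apply, Pi.smul_apply, smul_eq_mul]
    exact sum_grayIdempotent_mul_of_Phi_eq fun j => congrFun (hga j) b
  rw [← hsum]
  exact C.sum_mem fun j _ => C.smul_mem _ (hgC j)

end GrayCodes

theorem Set.MapsTo.iterate_perm_pow {α ι : Type*} {f : α → α} {σ : Equiv.Perm ι}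
    {D : ι → Set α} (h : ∀ i, Set.MapsTo f (D i) (D (σ i))) (i : ι) :
    ∀ m : ℕ, Set.MapsTo f^[m] (D i) (D ((σ ^ m) i))
  | 0 => Set.mapsTo_id _
  | m + 1 => by
    rw [Function.iterate_succ', pow_succ', Equiv.Perm.mul_apply]
    exact (h _).comp (Set.MapsTo.iterate_perm_pow h i m)

theorem Set.MapsTo.iterate_orderOf {α ι : Type*} {f : α → α} {σ : Equiv.Perm ι}
    {D : ι → Set α} (h : ∀ i, Set.MapsTo f (D i) (D (σ i))) (i : ι) :
    Set.MapsTo f^[orderOf σ] (D i) (D i) := by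
  simpa [pow_orderOf_eq_one] using Set.MapsTo.iterate_perm_pow h i (orderOf σ)

section TwistedShift

variable {n : ℕ} [NeZero n]

def twistedShift {R : Type*} (f : R → R) (c : Fin n → R) : Fin n → R :=
  fun b => f (c (b - 1))

variable {p r k : ℕ} [Fact p.Prime] {θ : B p r k → B p r k} {g : GaloisField p r → GaloisField p r}
  {σ : Equiv.Perm (Fin (2 ^ k))}

lemma grayCoord_twistedShift (hσ : ∀ a i, Phi p r k (θ a) i = g (Phi p r k a (σ.symm i)))
    (c : Fin n → B p r k) (i : Fin (2 ^ k)) :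
    grayCoord p r k i (twistedShift θ c) = twistedShift g (grayCoord p r k (σ.symm i) c) :=
  funext fun b => hσ (c (b - 1)) i

theorem grayCode_twistedShift_mem (hσ : ∀ a i, Phi p r k (θ a) i = g (Phi p r k a (σ.symm i)))
    {C : Submodule (B p r k) (Fin n → B p r k)} (hC : ∀ c ∈ C, twistedShift θ c ∈ C)
    (i : Fin (2 ^ k)) : ∀ c ∈ grayCode C i, twistedShift g c ∈ grayCode C (σ i) := by
  rintro _ ⟨a, ha, rfl⟩
  refine ⟨twistedShift θ a, hC a ha, ?_⟩
  rw [grayCoord_twistedShift hσ, Equiv.symm_apply_apply]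

theorem twistedShift_mem_grayPreimage
    (hσ : ∀ a i, Phi p r k (θ a) i = g (Phi p r k a (σ.symm i)))
    {D : Fin (2 ^ k) → Submodule (GaloisField p r) (Fin n → GaloisField p r)}
    (hD : ∀ i, ∀ c ∈ D i, twistedShift g c ∈ D (σ i)) :
    ∀ a ∈ grayPreimage D, twistedShift θ a ∈ grayPreimage D := by
  intro a ha i
  rw [grayCoord_twistedShift hσ]
  simpa using hD _ _ (ha (σ.symm i))

end TwistedShift

theorem stmt_16_general (p r k n : ℕ) [Fact p.Prime] [NeZero n]
    (S : Finset (Fin k)) (π : Equiv.Perm (Fin k)) (t : ℕ)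
    (σ : Equiv.Perm (Fin (2 ^ k)))
    (hσ : ∀ (a : B p r k) (i : Fin (2 ^ k)),
      Phi p r k (Th p r k S (Lam p r k π t a)) i = Phi p r k a (σ.symm i) ^ p ^ t)
    (C : Submodule (B p r k) (Fin n → B p r k)) :
    ((∀ c ∈ C, (fun b : Fin n => Th p r k S (Lam p r k π t (c (b - 1)))) ∈ C) ↔
      ∃ D : Fin (2 ^ k) → Submodule (GaloisField p r) (Fin n → GaloisField p r),
        (C : Set (Fin n → B p r k)) =
          {a | ∀ i : Fin (2 ^ k), (fun b => Phi p r k (a b) i) ∈ D i} ∧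
        ∀ i : Fin (2 ^ k), ∀ c ∈ D i,
          (fun b : Fin n => c (b - 1) ^ p ^ t) ∈ D (σ i)) ∧
    ∀ D : Fin (2 ^ k) → Submodule (GaloisField p r) (Fin n → GaloisField p r),
      (C : Set (Fin n → B p r k)) =
          {a | ∀ i : Fin (2 ^ k), (fun b => Phi p r k (a b) i) ∈ D i} →
      (∀ i : Fin (2 ^ k), ∀ c ∈ D i,
          (fun b : Fin n => c (b - 1) ^ p ^ t) ∈ D (σ i)) →
      ∀ i : Fin (2 ^ k), ∀ c ∈ D i,
        (fun (y : Fin n → GaloisField p r) (b : Fin n) =>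
            y (b - 1) ^ p ^ t)^[orderOf σ] c ∈ D i := by
  refine ⟨⟨fun hC => ⟨grayCode C, coe_eq_grayPreimage_grayCode C,
      grayCode_twistedShift_mem (θ := fun a => Th p r k S (Lam p r k π t a)) hσ hC⟩, ?_⟩, ?_⟩
  · rintro ⟨D, hCD, hD⟩ c hc
    rw [← SetLike.mem_coe, hCD] at hc ⊢
    exact twistedShift_mem_grayPreimage (θ := fun a => Th p r k S (Lam p r k π t a)) hσ hD c hc
  · intro D _ hD i
    exact Set.MapsTo.iterate_orderOf (f := twistedShift (· ^ p ^ t)) hD i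

/-- Second characterization: with `θ = Θ_S ∘ Λ_{π,t}`, `σ_θ` its induced coordinate
permutation and `m = ord(σ_θ)`, a `B_k`-submodule `C` of `B_k^n` is `θ`-cyclic iff
`C = Ψ̄_k^{-1}(C_1, …, C_{2^k})` for `F_{p^r}`-linear codes `C_i` with
`T_{φ^t}(C_i) ⊆ C_{σ_θ(i)}` for all `i`; moreover for any such family, each `C_i` is
closed under `(T_{φ^t})^m`, i.e. each `C_i` is quasi-`φ^{tm}`-cyclic of index `m`. -/
theorem stmt_16 (p r k n : ℕ) [Fact p.Prime] [NeZero n] (hr : 1 ≤ r)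
    (S : Finset (Fin k)) (π : Equiv.Perm (Fin k)) (t : ℕ) (ht : t < r)
    (σ : Equiv.Perm (Fin (2 ^ k)))
    (hσ : ∀ (a : B p r k) (i : Fin (2 ^ k)),
      Phi p r k (Th p r k S (Lam p r k π t a)) i = Phi p r k a (σ.symm i) ^ p ^ t)
    (C : Submodule (B p r k) (Fin n → B p r k)) :
    ((∀ c ∈ C, (fun b : Fin n => Th p r k S (Lam p r k π t (c (b - 1)))) ∈ C) ↔
      ∃ D : Fin (2 ^ k) → Submodule (GaloisField p r) (Fin n → GaloisField p r),
        (C : Set (Fin n → B p r k)) =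
          {a | ∀ i : Fin (2 ^ k), (fun b => Phi p r k (a b) i) ∈ D i} ∧
        ∀ i : Fin (2 ^ k), ∀ c ∈ D i,
          (fun b : Fin n => c (b - 1) ^ p ^ t) ∈ D (σ i)) ∧
    ∀ D : Fin (2 ^ k) → Submodule (GaloisField p r) (Fin n → GaloisField p r),
      (C : Set (Fin n → B p r k)) =
          {a | ∀ i : Fin (2 ^ k), (fun b => Phi p r k (a b) i) ∈ D i} →
      (∀ i : Fin (2 ^ k), ∀ c ∈ D i,
          (fun b : Fin n => c (b - 1) ^ p ^ t) ∈ D (σ i)) →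
      ∀ i : Fin (2 ^ k), ∀ c ∈ D i,
        (fun (y : Fin n → GaloisField p r) (b : Fin n) =>
            y (b - 1) ^ p ^ t)^[orderOf σ] c ∈ D i :=
  stmt_16_general p r k n S π t σ hσ C
end
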